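/- arXiv:2103.01580 — 3 statements merged into one kernel-verified Lean document; each statement's English description precedes it below -/
import Mathlib

section
/- Let s_1, ..., s_n and t_1, ..., t_m be positive real numbers such that the sum of the s_i equals the sum of the t_j, and such that some pair of numbers among {s_1, ..., s_n, t_1, ..., t_m} has irrational ratio. Then there exist permutations of the s_i's and of the t_j's such that, after reordering, the equality s_1 + ... + s_k = t_1 + ... + t_l holds only for k = n and l = m. -/
/-!
Let `T` be the common total. Since some ratio is irrational, some `s_i` or `t_j` is not a rational
multiple of `T`, so there is a `ℚ`-linear functional `f : ℝ → ℚ` with `f T = 0` that does not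
vanish on all of the `s_i, t_j`. Order the `s_i` so that `f (s_i)` decreases and the `t_j` so that
`f (t_j)` increases. The values `f (s_i)` sum to `f T = 0`, so every proper initial sum of them is
`≥ 0`, and `> 0` unless all vanish; dually the proper initial sums of the `f (t_j)` are `≤ 0`, and
`< 0` unless all vanish. Hence two proper initial sums never agree, and by positivity a proper
initial sum never equals the full sum `T`.
-/

open Finset

def prefixSum {M : Type*} [AddCommMonoid M] {n : ℕ} (c : Fin n → M) (k : ℕ) : M :=
  ∑ i ∈ univ.filter (fun i : Fin n => (i : ℕ) < k), c i

section prefixSum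

variable {n : ℕ}

theorem prefixSum_of_le {M : Type*} [AddCommMonoid M] (c : Fin n → M) {k : ℕ} (hk : n ≤ k) :
    prefixSum c k = ∑ i, c i := by
  rw [prefixSum, filter_true_of_mem fun i _ => i.isLt.trans_le hk]

theorem map_prefixSum {M N F : Type*} [AddCommMonoid M] [AddCommMonoid N] [FunLike F M N]
    [AddMonoidHomClass F M N] (f : F) (c : Fin n → M) (k : ℕ) :
    f (prefixSum c k) = prefixSum (f ∘ c) k :=
  map_sum f c _

theorem prefixSum_neg {G : Type*} [AddCommGroup G] (c : Fin n → G) (k : ℕ) :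
    prefixSum (fun i => -c i) k = -prefixSum c k :=
  sum_neg_distrib c

theorem prefixSum_lt_sum {M : Type*} [AddCommMonoid M] [PartialOrder M]
    [IsOrderedCancelAddMonoid M] {c : Fin n → M} (hc : ∀ i, 0 < c i) {k : ℕ} (hk : k < n) :
    prefixSum c k < ∑ i, c i :=
  sum_lt_sum_of_subset (filter_subset _ _) (i := ⟨k, hk⟩) (mem_univ _) (by simp) (hc _)
    fun i _ _ => (hc i).le

theorem prefixSum_eq_sum_iff {M : Type*} [AddCommMonoid M] [PartialOrder M]
    [IsOrderedCancelAddMonoid M] {c : Fin n → M} (hc : ∀ i, 0 < c i) {k : ℕ} :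
    prefixSum c k = ∑ i, c i ↔ n ≤ k := by
  refine ⟨fun h => ?_, prefixSum_of_le c⟩
  by_contra! hk
  exact (prefixSum_lt_sum hc hk).ne h

variable {G : Type*} [AddCommGroup G] [LinearOrder G] [IsOrderedAddMonoid G]

-- Either the last term of the prefix is `≥ 0`, so all its terms are, or the remaining tail
-- consists of negative terms and the prefix equals minus that tail.
theorem Antitone.prefixSum_pos {c : Fin n → G} (hc : Antitone c) (hsum : ∑ i, c i = 0)
    (hne : c ≠ 0) {k : ℕ} (hk0 : 0 < k) (hkn : k < n) : 0 < prefixSum c k := by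
  have hc0 : 0 < c ⟨0, by omega⟩ := by
    by_contra! h
    have hall : ∀ i ∈ univ, c i ≤ 0 := fun i _ => (hc (by simp [Fin.le_def])).trans h
    exact hne (funext fun i => (sum_eq_zero_iff_of_nonpos hall).mp hsum i (mem_univ i))
  rcases le_or_gt 0 (c ⟨k - 1, by omega⟩) with hpos | hneg
  · refine sum_pos' (fun i hi => hpos.trans (hc ?_)) ⟨⟨0, by omega⟩, by simp [hk0], hc0⟩
    simp only [mem_filter, mem_univ, true_and] at hi
    simp only [Fin.le_def]; omega
  · have htail : ∑ i ∈ univ.filter (fun i : Fin n => ¬(i : ℕ) < k), c i < 0 := by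
      refine sum_neg (fun i hi => (hc ?_).trans_lt hneg) ⟨⟨k, hkn⟩, by simp⟩
      simp only [mem_filter, mem_univ, true_and] at hi
      simp only [Fin.le_def]; omega
    have hsplit := sum_filter_add_sum_filter_not univ (fun i : Fin n => (i : ℕ) < k) c
    rw [hsum] at hsplit
    rw [prefixSum, eq_neg_of_add_eq_zero_left hsplit]
    exact neg_pos.mpr htail

theorem Monotone.prefixSum_neg {c : Fin n → G} (hc : Monotone c) (hsum : ∑ i, c i = 0)
    (hne : c ≠ 0) {k : ℕ} (hk0 : 0 < k) (hkn : k < n) : prefixSum c k < 0 := by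
  have := hc.neg.prefixSum_pos (by simp [sum_neg_distrib, hsum]) (neg_ne_zero.mpr hne) hk0 hkn
  rwa [_root_.prefixSum_neg, neg_pos] at this

theorem prefixSum_ne_of_antitone_of_monotone {m : ℕ} {c : Fin n → G} {d : Fin m → G}
    (hc : Antitone c) (hd : Monotone d) (hcsum : ∑ i, c i = 0) (hdsum : ∑ j, d j = 0)
    (hne : c ≠ 0 ∨ d ≠ 0) {k l : ℕ} (hk0 : 0 < k) (hkn : k < n) (hl0 : 0 < l) (hlm : l < m) :
    prefixSum c k ≠ prefixSum d l := by
  by_cases hc0 : c = 0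
  · subst hc0
    have := hd.prefixSum_neg hdsum (hne.resolve_left (not_not.mpr rfl)) hl0 hlm
    simp only [prefixSum, Pi.zero_apply, sum_const_zero] at this ⊢
    exact this.ne'
  · have hd_nonpos : prefixSum d l ≤ 0 := by
      by_cases hd0 : d = 0
      · simp [hd0, prefixSum]
      · exact (hd.prefixSum_neg hdsum hd0 hl0 hlm).le
    exact (hd_nonpos.trans_lt (hc.prefixSum_pos hcsum hc0 hk0 hkn)).ne'

end prefixSum

theorem Fin.exists_perm_antitone_comp {α : Type*} [LinearOrder α] {n : ℕ} (c : Fin n → α) :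
    ∃ σ : Equiv.Perm (Fin n), Antitone (c ∘ σ) :=
  ⟨Tuple.sort (OrderDual.toDual ∘ c), monotone_toDual_comp_iff.mp (Tuple.monotone_sort _)⟩

theorem not_irrational_div_of_mem_span {x y T : ℝ} (hx : x ∈ ℚ ∙ T) (hy : y ∈ ℚ ∙ T) :
    ¬Irrational (x / y) := by
  obtain ⟨a, rfl⟩ := Submodule.mem_span_singleton.mp hx
  obtain ⟨b, rfl⟩ := Submodule.mem_span_singleton.mp hy
  rcases eq_or_ne T 0 with rfl | hT
  · simp
  · rw [Rat.smul_def, Rat.smul_def, mul_div_mul_right _ _ hT, ← Rat.cast_div]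
    exact Rat.not_irrational _

/-- Lemma on reordering two families of positive reals with equal sums and some
pair of irrational ratio, so that no proper initial partial sums coincide. -/
theorem reorder_partial_sums_ne
    (n m : ℕ) (s : Fin n → ℝ) (t : Fin m → ℝ)
    (hs : ∀ i, 0 < s i) (ht : ∀ j, 0 < t j)
    (hsum : ∑ i, s i = ∑ j, t j)
    (hirr : ∃ x ∈ Set.range s ∪ Set.range t, ∃ y ∈ Set.range s ∪ Set.range t,
      Irrational (x / y)) :
    ∃ σ : Equiv.Perm (Fin n), ∃ τ : Equiv.Perm (Fin m),
      ∀ k l : ℕ, 1 ≤ k → k ≤ n → 1 ≤ l → l ≤ m →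
        (∑ i ∈ Finset.univ.filter (fun i : Fin n => (i : ℕ) < k), s (σ i)) =
          (∑ j ∈ Finset.univ.filter (fun j : Fin m => (j : ℕ) < l), t (τ j)) →
        k = n ∧ l = m := by
  set T := ∑ i, s i
  obtain ⟨v, hv, hvT⟩ : ∃ v ∈ Set.range s ∪ Set.range t, v ∉ ℚ ∙ T := by
    obtain ⟨x, hx, y, hy, hxy⟩ := hirr
    by_contra! h
    exact not_irrational_div_of_mem_span (h x hx) (h y hy) hxy
  obtain ⟨f, hfv, hTf⟩ := Submodule.exists_le_ker_of_notMem hvT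
  have hfT : f T = 0 := hTf (Submodule.mem_span_singleton_self T)
  obtain ⟨σ, hσ⟩ := Fin.exists_perm_antitone_comp (f ∘ s)
  refine ⟨σ, Tuple.sort (f ∘ t), fun k l hk0 hkn hl0 hlm heq => ?_⟩
  set τ := Tuple.sort (f ∘ t)
  have hiff : n ≤ k ↔ m ≤ l := by
    rw [← prefixSum_eq_sum_iff (fun i => hs (σ i)), ← prefixSum_eq_sum_iff (fun j => ht (τ j)),
      Equiv.sum_comp, Equiv.sum_comp, ← hsum]
    exact Eq.congr_left heq
  by_cases hk : n ≤ k
  · exact ⟨by omega, by have := hiff.mp hk; omega⟩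
  have hfs : ∑ i, ((f ∘ s) ∘ σ) i = 0 := by
    rw [← hfT, map_sum]; exact Equiv.sum_comp σ (f ∘ s)
  have hft : ∑ j, ((f ∘ t) ∘ τ) j = 0 := by
    rw [← hfT, hsum, map_sum]; exact Equiv.sum_comp τ (f ∘ t)
  have hne : (f ∘ s) ∘ σ ≠ 0 ∨ (f ∘ t) ∘ τ ≠ 0 := by
    rcases hv with ⟨i, rfl⟩ | ⟨j, rfl⟩
    · exact .inl fun h => hfv (by simpa using congrFun h (σ.symm i))
    · exact .inr fun h => hfv (by simpa using congrFun h (τ.symm j))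
  refine absurd (congrArg f heq) ?_
  rw [← prefixSum, ← prefixSum, map_prefixSum, map_prefixSum]
  exact prefixSum_ne_of_antitone_of_monotone hσ (Tuple.monotone_sort (f ∘ t)) hfs hft hne hk0
    (by omega) hl0 (by rw [hiff] at hk; omega)
end

section
/- Let v be a nonzero vector in ℤ^{2g} whose entries have greatest common divisor 1 (a primitive integer vector). Then there exists a matrix A in the integral symplectic group Sp(2g, ℤ) such that A·v = (1, 1, ..., 1). -/
open Matrix MulAction
open scoped MatrixGroups

/-!
Write `v = (x, y)` with `x, y ∈ ℤ^g`. Letting `SL(2, ℤ)` act independently on each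
coordinate pair `(x k, y k)` is symplectic, and Bézout makes every `y k` vanish. The block
matrices `diag(A, A⁻ᵀ)` with `A ∈ SL(g, ℤ)` are symplectic too, and `SL(g, ℤ)` moves any `x`
to a multiple `t • e_a` of a basis vector: in an orbit, a vector of minimal `ℓ¹`-norm has a
single nonzero entry, as a transvection would otherwise shorten it. Entries of a vector are
integer combinations of the entries of any vector in its orbit, so `t = ±1` when `v` is
primitive, and `-1 ∈ Sp(2g, ℤ)` fixes the sign. Hence every primitive vector, `(1, …, 1)`
included, lies in the orbit of `e_a`.
-/

theorem Int.natAbs_add_neg_sign_mul_sign_mul_lt {p q : ℤ} (hq : q ≠ 0)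
    (hqp : q.natAbs ≤ p.natAbs) : (p + -(p.sign * q.sign) * q).natAbs < p.natAbs := by
  have hp : p ≠ 0 := by omega
  rcases hp.lt_or_gt with hp | hp <;> rcases hq.lt_or_gt with hq | hq <;>
    simp [Int.sign_eq_one_of_pos, Int.sign_eq_neg_one_of_neg, *] <;> omega

theorem Int.exists_SL2_mul_add_mul_eq_zero (p q : ℤ) :
    ∃ A : SL(2, ℤ), A 1 0 * p + A 1 1 * q = 0 := by
  rcases (Int.gcd p q).eq_zero_or_pos with h | h
  · obtain ⟨rfl, rfl⟩ := Int.gcd_eq_zero_iff.mp h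
    exact ⟨1, by simp⟩
  · obtain ⟨d, p', q', -, hpq, rfl, rfl⟩ := Int.exists_gcd_one' h
    have hcop : IsCoprime (-q') p' := by
      rwa [Int.isCoprime_iff_gcd_eq_one, Int.neg_gcd, Int.gcd_comm]
    obtain ⟨A, hA0, hA1⟩ := hcop.exists_SL2_row 1
    exact ⟨A, by rw [hA0, hA1]; ring⟩

namespace Matrix.SpecialLinearGroup

variable {ι R : Type*} [Fintype ι] [DecidableEq ι] [CommRing R]

lemma transvection_smul {i j : ι} (hij : i ≠ j) (b : R) (y : ι → R) :
    transvection hij b • y = Function.update y i (y i + b * y j) := by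
  ext k
  rcases eq_or_ne k i with rfl | hk
  · simp [SpecialLinearGroup.smul_def, transvection_coe, add_mulVec, single_mulVec]
  · simp [SpecialLinearGroup.smul_def, transvection_coe, add_mulVec, single_mulVec, hk]

lemma exists_smul_single_eq_single (i a : ι) (t : R) :
    ∃ B : SpecialLinearGroup ι R, B • (Pi.single i t : ι → R) = Pi.single a t := by
  rcases eq_or_ne a i with rfl | hai
  · exact ⟨1, one_smul _ _⟩
  refine ⟨transvection hai.symm (-1) * transvection hai 1, ?_⟩
  ext k
  rw [mul_smul, transvection_smul, transvection_smul]
  rcases eq_or_ne k i with rfl | hki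
  · simp [hai.symm]
  rcases eq_or_ne k a with rfl | hka
  · simp [hai]
  · simp [hki, hka]

lemma exists_sum_natAbs_smul_lt (y : ι → ℤ) {i j : ι} (hij : i ≠ j) (hi : y i ≠ 0)
    (hj : y j ≠ 0) :
    ∃ B : SpecialLinearGroup ι ℤ, ∑ k, ((B • y) k).natAbs < ∑ k, (y k).natAbs := by
  wlog hji : (y j).natAbs ≤ (y i).natAbs generalizing i j
  · exact this hij.symm hj hi (le_of_not_ge hji)
  refine ⟨transvection hij (-((y i).sign * (y j).sign)), ?_⟩
  rw [transvection_smul]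
  refine Finset.sum_lt_sum (fun k _ => ?_) ⟨i, Finset.mem_univ _, ?_⟩
  · rcases eq_or_ne k i with rfl | hk
    · simpa using (Int.natAbs_add_neg_sign_mul_sign_mul_lt hj hji).le
    · simp [hk]
  · simpa using Int.natAbs_add_neg_sign_mul_sign_mul_lt hj hji

theorem exists_smul_eq_single (a : ι) (x : ι → ℤ) :
    ∃ (A : SpecialLinearGroup ι ℤ) (t : ℤ), A • x = Pi.single a t := by
  let N (y : ι → ℤ) : ℕ := ∑ k, (y k).natAbs
  set y := Function.argminOn N (orbit (SpecialLinearGroup ι ℤ) x) ⟨x, mem_orbit_self x⟩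
  have hy : y ∈ orbit _ x := Function.argminOn_mem _ _ _
  have hsupp : ∀ i j, i ≠ j → y i ≠ 0 → y j = 0 := fun i j hij hi => by
    by_contra hj
    obtain ⟨B, hB⟩ := exists_sum_natAbs_smul_lt y hij hi hj
    exact Function.not_lt_argminOn N _ (mem_orbit_of_mem_orbit B hy) hB
  obtain ⟨i, hi⟩ : ∃ i, y = Pi.single i (y i) := by
    by_cases h : ∃ i, y i ≠ 0
    · obtain ⟨i, hi⟩ := h
      refine ⟨i, funext fun k => ?_⟩
      rcases eq_or_ne k i with rfl | hk
      · simp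
      · simp [hk, hsupp i k hk.symm hi]
    · push Not at h
      exact ⟨a, funext fun k => by simp [h]⟩
  obtain ⟨A, hA⟩ := mem_orbit_iff.mp hy
  obtain ⟨B, hB⟩ := exists_smul_single_eq_single i a (y i)
  refine ⟨B * A, y i, ?_⟩
  rw [mul_smul, hA, ← hB, ← hi]

end Matrix.SpecialLinearGroup

namespace SymplecticGroup

variable {l R : Type*} [Fintype l] [DecidableEq l] [CommRing R]

lemma smul_def (A : symplecticGroup l R) (v : l ⊕ l → R) : A • v = A.1 *ᵥ v := rfl

lemma fromBlocks_diagonal_mem (A : l → SL(2, R)) :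
    fromBlocks (diagonal fun k => A k 0 0) (diagonal fun k => A k 0 1)
      (diagonal fun k => A k 1 0) (diagonal fun k => A k 1 1) ∈ symplecticGroup l R := by
  refine fromBlocks_mem_iff.mpr ⟨?_, ?_, ?_⟩
  · simp [mul_comm]
  · simp [mul_comm]
  · rw [diagonal_transpose, diagonal_transpose, diagonal_mul_diagonal, diagonal_mul_diagonal,
      diagonal_sub, ← diagonal_one]
    congr 1
    funext k
    have hdet := (A k).det_coe
    rw [det_fin_two] at hdet
    linear_combination hdet

lemma fromBlocks_zero_mem {A D : Matrix l l R} (h : Aᵀ * D = 1) :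
    fromBlocks A 0 0 D ∈ symplecticGroup l R :=
  fromBlocks_mem_iff.mpr ⟨by simp, by simp, by simpa using h⟩

lemma sum_elim_mem_orbit_of_SL2 (A : l → SL(2, R)) (v : l ⊕ l → R) :
    Sum.elim (fun k => A k 0 0 * v (.inl k) + A k 0 1 * v (.inr k))
      (fun k => A k 1 0 * v (.inl k) + A k 1 1 * v (.inr k)) ∈
      orbit (symplecticGroup l R) v :=
  mem_orbit_iff.mpr ⟨⟨_, fromBlocks_diagonal_mem A⟩, by
    rw [smul_def, fromBlocks_mulVec]
    congr 1 <;> funext k <;> simp [mulVec_diagonal]⟩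

lemma sum_elim_smul_mem_orbit (A : SpecialLinearGroup l R) (x : l → R) :
    Sum.elim (A • x) 0 ∈ orbit (symplecticGroup l R) (Sum.elim x (0 : l → R)) := by
  have hA : A.1ᵀ * (A⁻¹).1ᵀ = 1 := by
    rw [← transpose_mul, show (A⁻¹).1 * A.1 = 1 from congrArg Subtype.val (inv_mul_cancel A),
      transpose_one]
  refine mem_orbit_iff.mpr ⟨⟨_, fromBlocks_zero_mem hA⟩, ?_⟩
  rw [smul_def, fromBlocks_mulVec]
  simp only [Sum.elim_comp_inl, Sum.elim_comp_inr, mulVec_zero, add_zero, zero_mulVec]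
  rfl

lemma dvd_of_mem_orbit {v w : l ⊕ l → R} (hw : w ∈ orbit (symplecticGroup l R) v) {d : R}
    (hd : ∀ i, d ∣ w i) (i : l ⊕ l) : d ∣ v i := by
  obtain ⟨B, rfl⟩ := mem_orbit_symm.mp hw
  exact Finset.dvd_sum fun j _ => dvd_mul_of_dvd_right (hd j) _

lemma neg_mem_orbit (v : l ⊕ l → R) : -v ∈ orbit (symplecticGroup l R) v :=
  ⟨⟨-1, neg_mem (one_mem _)⟩, by simp⟩

lemma exists_sum_elim_zero_mem_orbit (v : l ⊕ l → ℤ) :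
    ∃ x : l → ℤ, Sum.elim x 0 ∈ orbit (symplecticGroup l ℤ) v := by
  choose A hA using fun k => Int.exists_SL2_mul_add_mul_eq_zero (v (.inl k)) (v (.inr k))
  exact ⟨_, by simpa only [hA, ← Pi.zero_def] using sum_elim_mem_orbit_of_SL2 A v⟩

lemma exists_single_mem_orbit (a : l) (v : l ⊕ l → ℤ) :
    ∃ t : ℤ, Pi.single (.inl a) t ∈ orbit (symplecticGroup l ℤ) v := by
  obtain ⟨x, hx⟩ := exists_sum_elim_zero_mem_orbit v
  obtain ⟨A, t, hA⟩ := SpecialLinearGroup.exists_smul_eq_single a x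
  refine ⟨t, ?_⟩
  rw [← orbit_eq_iff.mpr hx, ← Sum.elim_single_zero, ← hA]
  exact sum_elim_smul_mem_orbit A x

lemma single_one_mem_orbit (a : l) {v : l ⊕ l → ℤ}
    (hv : ∀ d : ℤ, (∀ i, d ∣ v i) → IsUnit d) :
    Pi.single (.inl a) 1 ∈ orbit (symplecticGroup l ℤ) v := by
  obtain ⟨t, ht⟩ := exists_single_mem_orbit a v
  have htv : ∀ i, t ∣ v i := dvd_of_mem_orbit ht fun i => by
    rcases eq_or_ne i (.inl a) with rfl | hi <;> simp [*]
  rcases Int.isUnit_iff.mp (hv t htv) with rfl | rfl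
  · exact ht
  · rw [← orbit_eq_iff.mpr ht]
    simpa [Pi.single_neg] using neg_mem_orbit (Pi.single (.inl a) (-1) : l ⊕ l → ℤ)

end SymplecticGroup

theorem symplectic_transitive_on_primitive_general (g : ℕ) (hg : 1 ≤ g)
    (v : (Fin g ⊕ Fin g) → ℤ)
    (hprim : Finset.univ.gcd v = 1) :
    ∃ A : Matrix (Fin g ⊕ Fin g) (Fin g ⊕ Fin g) ℤ,
      A ∈ Matrix.symplecticGroup (Fin g) ℤ ∧ A.mulVec v = fun _ => 1 := by
  let a : Fin g := ⟨0, hg⟩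
  let e : Fin g ⊕ Fin g → ℤ := Pi.single (.inl a) 1
  have hv : e ∈ orbit (symplecticGroup (Fin g) ℤ) v :=
    SymplecticGroup.single_one_mem_orbit a fun d hd =>
      isUnit_of_dvd_one (hprim ▸ Finset.dvd_gcd fun i _ => hd i)
  have hone : (fun _ => 1) ∈ orbit (symplecticGroup (Fin g) ℤ) e :=
    mem_orbit_symm.mp <| SymplecticGroup.single_one_mem_orbit a fun d hd =>
      isUnit_of_dvd_one (hd (.inl a))
  rw [orbit_eq_iff.mpr hv] at hone
  obtain ⟨A, hA⟩ := mem_orbit_iff.mp hone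
  exact ⟨A.1, A.2, hA⟩

theorem symplectic_transitive_on_primitive (g : ℕ) (hg : 1 ≤ g)
    (v : (Fin g ⊕ Fin g) → ℤ) (hv : v ≠ 0)
    (hprim : Finset.univ.gcd v = 1) :
    ∃ A : Matrix (Fin g ⊕ Fin g) (Fin g ⊕ Fin g) ℤ,
      A ∈ Matrix.symplecticGroup (Fin g) ℤ ∧ A.mulVec v = fun _ => 1 :=
  symplectic_transitive_on_primitive_general g hg v hprim
end

section
/- Let d_1 ≥ d_2 ≥ ... ≥ d_k be positive integers and p_1, ..., p_n integers with p_i ≥ 2, satisfying Σ d_j = Σ p_i + 2g - 2 and d_j ≤ Σ p_i - n - 1 for all j, where g ≥ 1 and n ≥ 1. Define a reduction on a non-increasing tuple of positive integers: replace the last two entries (a, b) by (a-1, b-1), deleting entries that become 0 (if the tuple has one entry e, replace by (e-1), deleting if 0). Then g successive reductions can be applied to (d_1, ..., d_k) without the tuple ever becoming empty or a singleton before completing all g reductions, and the resulting tuple (d_1, ..., d_{l-2}, d'_{l-1}, d'_l) has sum Σ p_i - 2. -/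
/-- One reduction step on a tuple of positive integers, represented as a list in
*non-decreasing* order (the reverse of the non-increasing tuple): decrease the
first two entries (the last two entries of the tuple) by one and delete any
entry that becomes zero. -/
def redStep : List ℕ → List ℕ
  | [] => []
  | [a] => [a - 1].filter (fun x => x ≠ 0)
  | a :: b :: r => ((a - 1) :: (b - 1) :: r).filter (fun x => x ≠ 0)

/-! Every reduction of a tuple of positive entries of length at least two removes exactly 2
from its sum and never creates a larger entry. As long as the reduced tuples keep a sum larger
than the bound `Σ pᵢ - n - 1` on their entries, they therefore have at least two entries; and
after `h < g` reductions the sum is still `Σ pᵢ + 2(g - h) - 2 ≥ Σ pᵢ`. -/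

lemma sum_filter_ne_zero (l : List ℕ) : (l.filter (· ≠ 0)).sum = l.sum := by
  induction l with
  | nil => rfl
  | cons a t ih => by_cases ha : a = 0 <;> simp_all

lemma sum_redStep_add_two {l : List ℕ} (hl : 2 ≤ l.length) (hpos : ∀ x ∈ l, 0 < x) :
    (redStep l).sum + 2 = l.sum := by
  match l, hl with
  | a :: b :: r, _ =>
    have ha := hpos a (by simp)
    have hb := hpos b (by simp)
    simp only [redStep, sum_filter_ne_zero, List.sum_cons]
    omega

lemma pos_of_mem_redStep {l : List ℕ} {x : ℕ} (hx : x ∈ redStep l) : 0 < x := by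
  match l with
  | [] => simp [redStep] at hx
  | [_] | _ :: _ :: _ =>
    simp only [redStep, List.mem_filter, decide_eq_true_eq] at hx
    exact Nat.pos_of_ne_zero hx.2

lemma exists_ge_of_mem_redStep {l : List ℕ} {x : ℕ} (hx : x ∈ redStep l) :
    ∃ y ∈ l, x ≤ y := by
  match l with
  | [] => simp [redStep] at hx
  | [a] =>
    simp only [redStep, List.mem_filter, List.mem_singleton] at hx
    exact ⟨a, by simp, by omega⟩
  | a :: b :: r =>
    simp only [redStep, List.mem_filter, List.mem_cons] at hx
    rcases hx.1 with rfl | rfl | hr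
    · exact ⟨a, by simp, by omega⟩
    · exact ⟨b, by simp, by omega⟩
    · exact ⟨x, by simp [hr], le_rfl⟩

lemma pos_of_mem_iterate_redStep {l : List ℕ} (hpos : ∀ x ∈ l, 0 < x) :
    ∀ h, ∀ x ∈ redStep^[h] l, 0 < x
  | 0, x, hx => hpos x hx
  | h + 1, _, hx => by
    rw [Function.iterate_succ_apply'] at hx
    exact pos_of_mem_redStep hx

lemma exists_ge_of_mem_iterate_redStep {l : List ℕ} :
    ∀ h, ∀ x ∈ redStep^[h] l, ∃ y ∈ l, x ≤ y
  | 0, x, hx => ⟨x, hx, le_rfl⟩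
  | h + 1, _, hx => by
    rw [Function.iterate_succ_apply'] at hx
    obtain ⟨y, hy, hxy⟩ := exists_ge_of_mem_redStep hx
    obtain ⟨z, hz, hyz⟩ := exists_ge_of_mem_iterate_redStep h y hy
    exact ⟨z, hz, hxy.trans hyz⟩

lemma sum_iterate_redStep {l : List ℕ} (hpos : ∀ x ∈ l, 0 < x) {h : ℕ}
    (hlen : ∀ k < h, 2 ≤ (redStep^[k] l).length) :
    (redStep^[h] l).sum + 2 * h = l.sum := by
  induction h with
  | zero => simp
  | succ h ih =>
    have hstep := sum_redStep_add_two (hlen h h.lt_succ_self)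
      (pos_of_mem_iterate_redStep hpos h)
    rw [Function.iterate_succ_apply', ← ih fun k hk => hlen k (hk.trans h.lt_succ_self)]
    omega

lemma two_le_length_of_le_of_lt_sum {L : List ℕ} {B : ℤ} (hB : 0 ≤ B)
    (hle : ∀ x ∈ L, (x : ℤ) ≤ B) (hlt : B < L.sum) : 2 ≤ L.length := by
  match L with
  | [] => simp only [List.sum_nil, Nat.cast_zero] at hlt; omega
  | [e] =>
    have he := hle e (List.mem_singleton_self e)
    rw [List.sum_singleton] at hlt
    omega
  | _ :: _ :: _ => simp

theorem reductions_possible_general (g n : ℕ) (hn : 1 ≤ n)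
    (p : Fin n → ℕ) (hp : ∀ i, 2 ≤ p i)
    (d : List ℕ) (hpos : ∀ x ∈ d, 0 < x)
    (hsum : (d.sum : ℤ) = (∑ i, (p i : ℤ)) + 2 * g - 2)
    (hord : ∀ x ∈ d, (x : ℤ) ≤ (∑ i, (p i : ℤ)) - n - 1) :
    (∀ h < g, 2 ≤ (redStep^[h] d).length) ∧
      ((redStep^[g] d).sum : ℤ) = (∑ i, (p i : ℤ)) - 2 := by
  have hS : 2 * (n : ℤ) ≤ ∑ i, (p i : ℤ) := by
    simpa [mul_comm] using Finset.card_nsmul_le_sum Finset.univ (fun i => (p i : ℤ)) 2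
      fun i _ => by exact_mod_cast hp i
  have hle : ∀ h, ∀ x ∈ redStep^[h] d, (x : ℤ) ≤ (∑ i, (p i : ℤ)) - n - 1 := fun h x hx => by
    obtain ⟨y, hy, hxy⟩ := exists_ge_of_mem_iterate_redStep h x hx
    exact (Int.ofNat_le.mpr hxy).trans (hord y hy)
  have hlen : ∀ h < g, 2 ≤ (redStep^[h] d).length := by
    intro h
    induction h using Nat.strong_induction_on with
    | _ h ih =>
      intro hh
      have hsum_h := sum_iterate_redStep hpos fun k hk => ih k hk (hk.trans hh)
      exact two_le_length_of_le_of_lt_sum (by omega) (hle h) (by omega)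
  have hsum_g := sum_iterate_redStep hpos hlen
  exact ⟨hlen, by omega⟩

theorem reductions_possible (g n : ℕ) (hg : 1 ≤ g) (hn : 1 ≤ n)
    (p : Fin n → ℕ) (hp : ∀ i, 2 ≤ p i)
    (d : List ℕ) (hpos : ∀ x ∈ d, 0 < x) (hsorted : d.Pairwise (· ≤ ·))
    (hsum : (d.sum : ℤ) = (∑ i, (p i : ℤ)) + 2 * g - 2)
    (hord : ∀ x ∈ d, (x : ℤ) ≤ (∑ i, (p i : ℤ)) - n - 1) :
    (∀ h < g, 2 ≤ (redStep^[h] d).length) ∧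
      ((redStep^[g] d).sum : ℤ) = (∑ i, (p i : ℤ)) - 2 :=
  reductions_possible_general g n hn p hp d hpos hsum hord
end
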